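/- Let λ be odd and suppose a k-MOFS(2λ) admits a full relation with row set X_1 and column set X_2. If k ≡ 1 (mod 8) then |X_1|·|X_2| ≡ 1 (mod 4), and if k ≡ 5 (mod 8) then |X_1|·|X_2| ≡ 3 (mod 4). -/

import Mathlib

/-- A binary frequency square of type F(n; n/2): an n×n {0,1}-matrix with
exactly n/2 ones in every row and every column. -/
def IsFreqSquare (n : ℕ) (F : Fin n → Fin n → Fin 2) : Prop :=
  (∀ r : Fin n, (Finset.univ.filter fun c => F r c = 1).card = n / 2) ∧
  (∀ c : Fin n, (Finset.univ.filter fun r => F r c = 1).card = n / 2)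

/-- Two binary frequency squares are orthogonal if each ordered pair of symbols
occurs exactly n^2/4 times when the squares are superimposed. -/
def OrthFS (n : ℕ) (F G : Fin n → Fin n → Fin 2) : Prop :=
  ∀ a b : Fin 2,
    (Finset.univ.filter fun p : Fin n × Fin n =>
      F p.1 p.2 = a ∧ G p.1 p.2 = b).card = n ^ 2 / 4

/-- A set of k mutually orthogonal binary frequency squares of order n. -/
def IsMOFS (n k : ℕ) (F : Fin k → Fin n → Fin n → Fin 2) : Prop :=
  (∀ i, IsFreqSquare n (F i)) ∧ ∀ i j, i ≠ j → OrthFS n (F i) (F j)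

/-- A full relation on a set of k binary frequency squares of order n:
a set X1 of rows and a set X2 of columns (with X_c = {1} for the symbol
columns) such that for every cell (r,c) the quantity
[r ∈ X1] + [c ∈ X2] + Σ_i F_i[r,c] is even. -/
def FullRelation (n k : ℕ) (F : Fin k → Fin n → Fin n → Fin 2)
    (X1 X2 : Finset (Fin n)) : Prop :=
  ∀ r c : Fin n,
    Even ((if r ∈ X1 then 1 else 0) + (if c ∈ X2 then 1 else 0) +
      ∑ i, (F i r c).val)

/-!
Write `s r c = ∑ i, F i r c` and let `x`, `y` be the indicators of `X1`, `X2`. The full relation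
says that every `w = s r c - x r - y c` is even, hence `8 ∣ w * (w - 2)`. Summing over all cells
and expanding, the only data needed about the squares are the row and column sums `k λ` of `s` and
its second moment `∑ s² = (k² + k) λ²`, which comes from orthogonality. This gives
`8 ∣ (k² - 3k) λ² + 2 (3 - k) λ (|X1| + |X2|) + 2 |X1| |X2|`, and for `λ` odd and `k ≡ 1 (mod 4)`
this forces `|X1|`, `|X2|` odd and `2 |X1| |X2| ≡ k + 1 (mod 8)`.
-/

open Finset

theorem Fin.val_two_eq_ite (v : Fin 2) : (v : ℕ) = if v = 1 then 1 else 0 := by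
  fin_cases v <;> rfl

theorem Fin.val_two_mul_val_two_eq_ite (v w : Fin 2) :
    (v : ℕ) * w = if v = 1 ∧ w = 1 then 1 else 0 := by
  fin_cases v <;> fin_cases w <;> rfl

section
variable {n : ℕ} {F G : Fin n → Fin n → Fin 2}

theorem IsFreqSquare.sum_row (hF : IsFreqSquare n F) (r : Fin n) :
    ∑ c, (F r c : ℕ) = n / 2 := by
  simpa only [card_filter, ← Fin.val_two_eq_ite] using hF.1 r

theorem IsFreqSquare.sum_col (hF : IsFreqSquare n F) (c : Fin n) :
    ∑ r, (F r c : ℕ) = n / 2 := by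
  simpa only [card_filter, ← Fin.val_two_eq_ite] using hF.2 c

theorem IsFreqSquare.sum_sum_mul_self (hF : IsFreqSquare n F) :
    ∑ r, ∑ c, (F r c : ℕ) * F r c = n * (n / 2) := by
  simp [Fin.val_two_mul_val_two_eq_ite, ← Fin.val_two_eq_ite, hF.sum_row]

theorem OrthFS.sum_sum_mul (h : OrthFS n F G) :
    ∑ r, ∑ c, (F r c : ℕ) * G r c = n ^ 2 / 4 := by
  simpa only [card_filter, ← Fin.val_two_mul_val_two_eq_ite, Fintype.sum_prod_type] using h 1 1

end

namespace IsMOFS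
variable {lam k : ℕ} {F : Fin k → Fin (2 * lam) → Fin (2 * lam) → Fin 2}

theorem sum_row_sum (hF : IsMOFS (2 * lam) k F) (r : Fin (2 * lam)) :
    ∑ c, ∑ i, (F i r c : ℕ) = k * lam := by
  rw [sum_comm]
  simp [(hF.1 _).sum_row]

theorem sum_col_sum (hF : IsMOFS (2 * lam) k F) (c : Fin (2 * lam)) :
    ∑ r, ∑ i, (F i r c : ℕ) = k * lam := by
  rw [sum_comm]
  simp [(hF.1 _).sum_col]

theorem sum_sum_mul (hF : IsMOFS (2 * lam) k F) (i j : Fin k) :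
    ∑ r, ∑ c, (F i r c : ℕ) * F j r c = lam ^ 2 + if i = j then lam ^ 2 else 0 := by
  split_ifs with hij
  · subst hij
    rw [(hF.1 i).sum_sum_mul_self, Nat.mul_div_cancel_left _ two_pos]
    ring
  · rw [(hF.2 i j hij).sum_sum_mul, mul_pow]
    norm_num

theorem sum_sum_sq_sum (hF : IsMOFS (2 * lam) k F) :
    ∑ r, ∑ c, (∑ i, (F i r c : ℕ)) ^ 2 = (k ^ 2 + k) * lam ^ 2 := by
  calc ∑ r, ∑ c, (∑ i, (F i r c : ℕ)) ^ 2
      = ∑ i, ∑ j, ∑ r, ∑ c, (F i r c : ℕ) * F j r c := by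
        simp_rw [sq, sum_mul_sum,
          sum_comm (s := (univ : Finset (Fin (2 * lam)))) (t := (univ : Finset (Fin k)))]
    _ = (k ^ 2 + k) * lam ^ 2 := by
        simp only [hF.sum_sum_mul, sum_add_distrib, sum_const, card_univ, Fintype.card_fin,
          smul_eq_mul, sum_ite_eq, mem_univ, ↓reduceIte]
        ring

end IsMOFS

theorem Int.eight_dvd_mul_sub_two_of_even {w : ℤ} (hw : Even w) : 8 ∣ w * (w - 2) := by
  obtain ⟨v, rfl⟩ := hw
  obtain ⟨t, ht⟩ := Int.even_mul_pred_self v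
  exact ⟨t, by linear_combination 4 * ht⟩

theorem sum_sum_mul_sub_two_eq {R C : Type*} [Fintype R] [Fintype C]
    (x : R → ℤ) (y : C → ℤ) (s : R → C → ℤ) {a b : ℤ}
    (hx : ∀ r, x r ^ 2 = x r) (hy : ∀ c, y c ^ 2 = y c)
    (hrow : ∀ r, ∑ c, s r c = a) (hcol : ∀ c, ∑ r, s r c = b) :
    ∑ r, ∑ c, (s r c - x r - y c) * (s r c - x r - y c - 2) =
      ∑ r, ∑ c, s r c ^ 2 - 2 * Fintype.card R * a + 3 * Fintype.card C * ∑ r, x r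
        + 3 * Fintype.card R * ∑ c, y c - 2 * a * ∑ r, x r - 2 * b * ∑ c, y c
        + 2 * (∑ r, x r) * ∑ c, y c := by
  have hcell : ∀ r c, (s r c - x r - y c) * (s r c - x r - y c - 2) =
      s r c ^ 2 - 2 * s r c + 3 * x r + 3 * y c - 2 * (x r * s r c) - 2 * (y c * s r c)
        + 2 * (x r * y c) := by
    intro r c
    linear_combination hx r + hy c
  have hys : ∑ r, ∑ c, y c * s r c = ∑ c, y c * b := by
    rw [sum_comm]; simp only [← mul_sum, hcol]
  simp only [hcell, sum_add_distrib, sum_sub_distrib, ← mul_sum, hrow, hys, ← sum_mul,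
    sum_const, card_univ, nsmul_eq_mul]
  ring

theorem FullRelation.eight_dvd {lam k : ℕ} {F : Fin k → Fin (2 * lam) → Fin (2 * lam) → Fin 2}
    {X1 X2 : Finset (Fin (2 * lam))} (hF : IsMOFS (2 * lam) k F)
    (hrel : FullRelation (2 * lam) k F X1 X2) :
    (8 : ℤ) ∣ ((k : ℤ) ^ 2 - 3 * k) * lam ^ 2 + 2 * (3 - k) * lam * (#X1 + #X2)
      + 2 * #X1 * #X2 := by
  set x : Fin (2 * lam) → ℤ := fun r => if r ∈ X1 then 1 else 0
  set y : Fin (2 * lam) → ℤ := fun c => if c ∈ X2 then 1 else 0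
  set s : Fin (2 * lam) → Fin (2 * lam) → ℤ := fun r c => ∑ i, (F i r c : ℕ)
  have hpar : ∀ r c, Even (s r c - x r - y c) := by
    intro r c
    have h : Even (x r + y c + s r c) := by
      simpa [x, y, s] using (hrel r c).natCast (α := ℤ)
    rw [show s r c - x r - y c = x r + y c + s r c - 2 * (x r + y c) by ring]
    exact h.sub (even_two_mul _)
  have hrow : ∀ r, ∑ c, s r c = k * lam := fun r => by
    simp only [s]; exact_mod_cast hF.sum_row_sum r
  have hcol : ∀ c, ∑ r, s r c = k * lam := fun c => by
    simp only [s]; exact_mod_cast hF.sum_col_sum c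
  have hsq : ∑ r, ∑ c, s r c ^ 2 = ((k : ℤ) ^ 2 + k) * lam ^ 2 := by
    simp only [s]; exact_mod_cast hF.sum_sum_sq_sum
  have hx : ∑ r, x r = #X1 := by simp [x]
  have hy : ∑ c, y c = #X2 := by simp [y]
  have hsum : (8 : ℤ) ∣ ∑ r, ∑ c, (s r c - x r - y c) * (s r c - x r - y c - 2) :=
    dvd_sum fun r _ => dvd_sum fun c _ => Int.eight_dvd_mul_sub_two_of_even (hpar r c)
  rw [sum_sum_mul_sub_two_eq x y s (fun r => by simp [x]) (fun c => by simp [y]) hrow hcol,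
    hsq, hx, hy, Fintype.card_fin] at hsum
  convert hsum using 1
  push_cast
  ring

theorem two_mul_mul_modEq_of_eight_dvd {k l A B : ℤ} (hk : k % 4 = 1) (hl : Odd l)
    (h : 8 ∣ (k ^ 2 - 3 * k) * l ^ 2 + 2 * (3 - k) * l * (A + B) + 2 * A * B) :
    2 * (A * B) ≡ k + 1 [ZMOD 8] := by
  obtain ⟨j, rfl⟩ : ∃ j, k = 4 * j + 1 := ⟨k / 4, by omega⟩
  obtain ⟨u, rfl⟩ := hl
  -- after these substitutions every monomial of `h` other than `-4j - 2 + 4A + 4B + 2AB`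
  -- has a coefficient divisible by 8, so `omega` can read off residues with products as atoms
  have hAB : Odd (A * B) := by
    rw [Int.odd_iff]
    ring_nf at h
    omega
  obtain ⟨⟨a, rfl⟩, ⟨b, rfl⟩⟩ := Int.odd_mul.mp hAB
  rw [Int.ModEq]
  ring_nf at h ⊢
  omega

/-- Let λ be odd and suppose a k-MOFS(2λ) admits a full relation (X1, X2).
If k ≡ 1 (mod 8) then |X1|·|X2| ≡ 1 (mod 4), and if k ≡ 5 (mod 8) then
|X1|·|X2| ≡ 3 (mod 4). -/
theorem stmt_7 (lam k : ℕ) (hlam : Odd lam)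
    (F : Fin k → Fin (2 * lam) → Fin (2 * lam) → Fin 2)
    (hmofs : IsMOFS (2 * lam) k F)
    (X1 X2 : Finset (Fin (2 * lam)))
    (hrel : FullRelation (2 * lam) k F X1 X2) :
    (k % 8 = 1 → (X1.card * X2.card) % 4 = 1) ∧
    (k % 8 = 5 → (X1.card * X2.card) % 4 = 3) := by
  have key (hk : (k : ℤ) % 4 = 1) : 2 * ((#X1 : ℤ) * #X2) ≡ k + 1 [ZMOD 8] :=
    two_mul_mul_modEq_of_eight_dvd hk hlam.natCast (hrel.eight_dvd hmofs)
  constructor <;> intro hk <;> have := key (by omega) <;> rw [Int.ModEq] at this <;> omega
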